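/- arXiv:2407.02938 — 5 statements merged into one kernel-verified Lean document; each statement's English description precedes it below -/
import Mathlib

section
/- Let n = p_1 p_2 ⋯ p_k be a product of k distinct primes with 2 ≤ k ≤ 4. Then the metric dimension of the essential ideal graph E_{Z_n} of Z_n = Z/nZ equals k − 1. -/
/-- An ideal `I` of a commutative ring `R` is essential if it is nonzero and has
nonzero intersection with every nonzero ideal of `R`. -/
def IsEssentialIdeal {R : Type*} [CommRing R] (I : Ideal R) : Prop :=
  I ≠ ⊥ ∧ ∀ J : Ideal R, J ≠ ⊥ → I ⊓ J ≠ ⊥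

/-- The essential ideal graph of a commutative ring `R`: vertices are the nonzero
proper ideals of `R`, and distinct vertices `I`, `J` are adjacent iff `I + J` is
an essential ideal of `R`. -/
def essentialIdealGraph (R : Type*) [CommRing R] :
    SimpleGraph {I : Ideal R // I ≠ ⊥ ∧ I ≠ ⊤} where
  Adj I J := I ≠ J ∧ IsEssentialIdeal (I.1 ⊔ J.1)
  symm := by
    constructor
    rintro I J ⟨hne, h⟩
    exact ⟨hne.symm, by rwa [sup_comm]⟩
  loopless := ⟨fun I h => h.1 rfl⟩

/-- The annihilating ideal graph of a commutative ring `R`: vertices are the nonzero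
annihilating ideals of `R`, with distinct vertices `I`, `J` adjacent iff `I * J = 0`. -/
def annihilatingIdealGraph (R : Type*) [CommRing R] :
    SimpleGraph {I : Ideal R // I ≠ ⊥ ∧ ∃ J : Ideal R, J ≠ ⊥ ∧ I * J = ⊥} where
  Adj I J := I ≠ J ∧ I.1 * J.1 = ⊥
  symm := by
    constructor
    rintro I J ⟨hne, h⟩
    exact ⟨hne.symm, by rwa [mul_comm]⟩
  loopless := ⟨fun I h => h.1 rfl⟩

/-- A set `W` of vertices of a graph `G` is a resolving set if any two distinct
vertices are distinguished by their distance to some element of `W`. -/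
def IsResolvingSet {V : Type*} (G : SimpleGraph V) (W : Set V) : Prop :=
  ∀ u v : V, u ≠ v → ∃ w ∈ W, G.dist u w ≠ G.dist v w

/-- The metric dimension of a graph: the least cardinality of a (finite) resolving set. -/
noncomputable def metricDim {V : Type*} (G : SimpleGraph V) : ℕ :=
  sInf {k : ℕ | ∃ W : Set V, W.Finite ∧ IsResolvingSet G W ∧ W.ncard = k}

/-- The degree of a vertex: the number of vertices adjacent to it. -/
noncomputable def gdeg {V : Type*} (G : SimpleGraph V) (v : V) : ℕ :=
  Nat.card {u : V // G.Adj v u}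

/-- The first Zagreb index: the sum of the squares of the vertex degrees. -/
noncomputable def zagreb1 {V : Type*} (G : SimpleGraph V) : ℕ :=
  ∑ᶠ v : V, (gdeg G v) ^ 2

/-- The second Zagreb index: the sum over edges `{u,v}` of `deg u * deg v`. -/
noncomputable def zagreb2 {V : Type*} (G : SimpleGraph V) : ℕ :=
  ∑ᶠ e ∈ G.edgeSet, Sym2.lift ⟨fun u v => gdeg G u * gdeg G v, fun u v => mul_comm _ _⟩ e

/-!
For squarefree `n = p₁ ⋯ p_k`, `ℤ/nℤ ≅ ∏ ℤ/pᵢ` has the Boolean cube `2^k` as its lattice of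
ideals. In a complemented lattice the only essential element is `⊤`, so `E_{ℤ/nℤ}` is the graph
on the proper nonempty subsets of `{1, …, k}` in which two sets are adjacent when their union is
everything. There, distinct vertices are at distance 1 (union everything), 2 (they meet) or 3
(otherwise), so the vertices outside a resolving set `W` inject into `{1,2,3}^W`, whence
`2^k - 2 ≤ 3^|W| + |W|`; for `k ≤ 4` this forces `|W| ≥ k - 1`, and the singletons
`{1}, …, {k-1}` resolve, which is a finite check.
-/

def comaximalGraph (α : Type*) [SemilatticeSup α] [BoundedOrder α] :
    SimpleGraph {a : α // a ≠ ⊥ ∧ a ≠ ⊤} where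
  Adj a b := a ≠ b ∧ a.1 ⊔ b.1 = ⊤
  symm := ⟨fun _ _ ⟨hne, h⟩ => ⟨hne.symm, by rwa [sup_comm]⟩⟩
  loopless := ⟨fun _ h => h.1 rfl⟩

def OrderIso.piCongrRight {ι : Type*} {α β : ι → Type*} [∀ i, LE (α i)] [∀ i, LE (β i)]
    (e : ∀ i, α i ≃o β i) : (∀ i, α i) ≃o ∀ i, β i where
  toEquiv := Equiv.piCongrRight fun i => (e i).toEquiv
  map_rel_iff' := by simp [Pi.le_def]

noncomputable def Ideal.piFieldOrderIso {ι : Type*} [Finite ι] (K : ι → Type*)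
    [∀ i, Field (K i)] : Ideal (Π i, K i) ≃o (ι → Bool) := by
  classical
  exact Ideal.piOrderIso.trans (OrderIso.piCongrRight fun _ => IsSimpleOrder.orderIsoBool)

noncomputable def ZMod.idealOrderIsoOfPrimes {ι : Type*} [Fintype ι] {p : ι → ℕ}
    (hp : ∀ i, (p i).Prime) (hinj : Function.Injective p) :
    Ideal (ZMod (∏ i, p i)) ≃o (ι → Bool) :=
  haveI := fun i => Fact.mk (hp i)
  (ZMod.prodEquivPi p fun i j hij =>
    (Nat.coprime_primes (hp i) (hp j)).2 (hinj.ne hij)).symm.idealComapOrderIso.trans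
    (Ideal.piFieldOrderIso _)

section ComaximalGraph

variable {α β : Type*}

theorem isEssentialIdeal_iff_eq_top {R : Type*} [CommRing R] [Nontrivial R]
    [ComplementedLattice (Ideal R)] {I : Ideal R} : IsEssentialIdeal I ↔ I = ⊤ := by
  refine ⟨fun ⟨_, hI⟩ => ?_, fun h => ⟨h ▸ top_ne_bot, fun J hJ => by simpa [h] using hJ⟩⟩
  obtain ⟨J, hIJ⟩ := exists_isCompl I
  by_contra hne
  have hJ : J ≠ ⊥ := fun h => hne (by simpa [h] using hIJ.sup_eq_top)
  exact hI J hJ hIJ.inf_eq_bot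

theorem essentialIdealGraph_eq_comaximalGraph (R : Type*) [CommRing R] [Nontrivial R]
    [ComplementedLattice (Ideal R)] : essentialIdealGraph R = comaximalGraph (Ideal R) := by
  ext I J
  exact and_congr_right fun _ => isEssentialIdeal_iff_eq_top

def OrderIso.comaximalGraphIso [Lattice α] [BoundedOrder α] [Lattice β] [BoundedOrder β]
    (e : α ≃o β) : comaximalGraph α ≃g comaximalGraph β where
  toEquiv := e.toEquiv.subtypeEquiv fun a => by
    simp only [OrderIso.coe_toEquiv, ne_eq, map_eq_bot_iff, map_eq_top_iff]
  map_rel_iff' {a b} := by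
    simp only [comaximalGraph, Equiv.subtypeEquiv_apply, OrderIso.coe_toEquiv, ne_eq,
      e.injective.eq_iff, Subtype.ext_iff, ← map_sup, map_eq_top_iff]

variable [BooleanAlgebra α] {a b : {a : α // a ≠ ⊥ ∧ a ≠ ⊤}}

theorem comaximalGraph_exists_adj_adj_of_inf_ne_bot (h : a.1 ⊓ b.1 ≠ ⊥) :
    ∃ c, (comaximalGraph α).Adj a c ∧ (comaximalGraph α).Adj c b := by
  have hc : (a.1 ⊓ b.1)ᶜ ≠ ⊥ ∧ (a.1 ⊓ b.1)ᶜ ≠ ⊤ := by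
    rw [ne_eq, ne_eq, compl_eq_bot, compl_eq_top, inf_eq_top_iff]
    exact ⟨fun h' => a.2.2 h'.1, h⟩
  refine ⟨⟨_, hc⟩, ⟨fun hac => h ?_, ?_⟩, ⟨fun hcb => h ?_, ?_⟩⟩
  · exact le_compl_self.1 (inf_le_left.trans (congrArg Subtype.val hac).le)
  · exact top_le_iff.1 (sup_compl_eq_top.ge.trans (sup_le_sup_right inf_le_left _))
  · exact le_compl_self.1 (inf_le_right.trans (congrArg Subtype.val hcb).ge)
  · exact top_le_iff.1 (compl_sup_eq_top.ge.trans (sup_le_sup_left inf_le_right _))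

theorem comaximalGraph_not_adj_adj_of_inf_eq_bot (h : a.1 ⊓ b.1 = ⊥) (c) :
    ¬((comaximalGraph α).Adj a c ∧ (comaximalGraph α).Adj c b) := by
  rintro ⟨⟨-, hac⟩, ⟨-, hcb⟩⟩
  apply c.2.2
  calc c.1 = c.1 ⊔ a.1 ⊓ b.1 := by rw [h, sup_bot_eq]
    _ = ⊤ := by rw [sup_inf_left, sup_comm c.1, hac, hcb, inf_top_eq]

theorem comaximalGraph_edist_eq_three (hab : a ≠ b) (hadj : a.1 ⊔ b.1 ≠ ⊤)
    (h : a.1 ⊓ b.1 = ⊥) : (comaximalGraph α).edist a b = 3 := by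
  have hlt : 2 < (comaximalGraph α).edist a b := by
    refine SimpleGraph.two_lt_edist_iff.2 ⟨hab, fun h' => hadj h'.2, ?_⟩
    ext c
    simpa [SimpleGraph.mem_commonNeighbors, (comaximalGraph α).adj_comm c b] using
      comaximalGraph_not_adj_adj_of_inf_eq_bot h c
  let a' : {a : α // a ≠ ⊥ ∧ a ≠ ⊤} := ⟨a.1ᶜ, by simpa [and_comm] using a.2⟩
  have haa' : (comaximalGraph α).Adj a a' :=
    ⟨fun h' => a.2.1 (le_compl_self.1 (congrArg Subtype.val h').le), sup_compl_eq_top⟩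
  have ha'b : a'.1 ⊓ b.1 ≠ ⊥ := by
    rw [inf_eq_right.2 (le_compl_iff_disjoint_left.2 (disjoint_iff.2 h))]
    exact b.2.1
  obtain ⟨d, ha'd, hdb⟩ := comaximalGraph_exists_adj_adj_of_inf_ne_bot ha'b
  have hle : (comaximalGraph α).edist a b ≤ 3 :=
    (SimpleGraph.Walk.cons haa' (.cons ha'd (.cons hdb .nil))).edist_le
  exact le_antisymm hle (Order.add_one_le_of_lt hlt)

theorem comaximalGraph_dist [DecidableEq α] (a b : {a : α // a ≠ ⊥ ∧ a ≠ ⊤}) :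
    (comaximalGraph α).dist a b =
      if a = b then 0 else if a.1 ⊔ b.1 = ⊤ then 1 else if a.1 ⊓ b.1 = ⊥ then 3 else 2 := by
  rw [SimpleGraph.dist]
  split_ifs with hab hadj hbot
  · simp [hab]
  · rw [(comaximalGraph α).edist_eq_one_iff_adj.2 ⟨hab, hadj⟩]; rfl
  · rw [comaximalGraph_edist_eq_three hab hadj hbot]; rfl
  · obtain ⟨c, hac, hcb⟩ := comaximalGraph_exists_adj_adj_of_inf_ne_bot hbot
    rw [(comaximalGraph α).edist_eq_two_iff.2 ⟨hab, fun h => hadj h.2, c, hac, hcb.symm⟩]; rfl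

theorem comaximalGraph_dist_le_three (a b : {a : α // a ≠ ⊥ ∧ a ≠ ⊤}) :
    (comaximalGraph α).dist a b ≤ 3 := by
  classical
  rw [comaximalGraph_dist]
  split_ifs <;> omega

theorem comaximalGraph_preconnected : (comaximalGraph α).Preconnected := by
  classical
  intro a b
  by_cases hab : a = b
  · exact hab ▸ .refl a
  · refine SimpleGraph.Reachable.of_dist_ne_zero ?_
    rw [comaximalGraph_dist, if_neg hab]
    split_ifs <;> omega

end ComaximalGraph

section MetricDimension

variable {V V' : Type*} {G : SimpleGraph V} {G' : SimpleGraph V'}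

theorem SimpleGraph.Hom.edist_le (f : G →g G') (u v : V) :
    G'.edist (f u) (f v) ≤ G.edist u v := by
  by_cases h : G.Reachable u v
  · obtain ⟨w, hw⟩ := h.exists_walk_length_eq_edist
    exact hw ▸ (w.map f).edist_le.trans_eq (by rw [SimpleGraph.Walk.length_map])
  · rw [SimpleGraph.edist_eq_top_of_not_reachable h]
    exact le_top

theorem SimpleGraph.Iso.edist_eq (e : G ≃g G') (u v : V) : G'.edist (e u) (e v) = G.edist u v :=
  (e.toHom.edist_le u v).antisymm <| by
    simpa using e.symm.toHom.edist_le (e u) (e v)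

theorem SimpleGraph.Iso.dist_eq (e : G ≃g G') (u v : V) : G'.dist (e u) (e v) = G.dist u v := by
  rw [SimpleGraph.dist, SimpleGraph.dist, e.edist_eq]

theorem IsResolvingSet.image {W : Set V} (h : IsResolvingSet G W) (e : G ≃g G') :
    IsResolvingSet G' (e '' W) := by
  intro u v huv
  obtain ⟨w, hw, hd⟩ := h (e.symm u) (e.symm v) (by simpa using huv)
  refine ⟨e w, Set.mem_image_of_mem e hw, ?_⟩
  rwa [← e.apply_symm_apply u, ← e.apply_symm_apply v, e.dist_eq, e.dist_eq]

theorem metricDim_congr (e : G ≃g G') : metricDim G = metricDim G' := by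
  unfold metricDim
  congr 1
  ext m
  constructor
  · rintro ⟨W, hW, hres, rfl⟩
    exact ⟨e '' W, hW.image e, hres.image e, Set.ncard_image_of_injective W e.injective⟩
  · rintro ⟨W, hW, hres, rfl⟩
    exact ⟨e.symm '' W, hW.image e.symm, hres.image e.symm,
      Set.ncard_image_of_injective W e.symm.injective⟩

theorem IsResolvingSet.card_le [Finite V] (hconn : G.Preconnected) {D : ℕ}
    (hD : ∀ u v, G.dist u v ≤ D) {W : Set V} (hW : IsResolvingSet G W) :
    Nat.card V ≤ D ^ W.ncard + W.ncard := by
  let f : ↥Wᶜ → W → Fin D := fun v w =>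
    ⟨G.dist v w - 1, by
      have := hD v w
      have := (hconn v w).pos_dist_of_ne fun h => v.2 (h ▸ w.2)
      omega⟩
  have hf : f.Injective := by
    intro u v huv
    by_contra hne
    obtain ⟨w, hw, hd⟩ := hW u v (Subtype.coe_ne_coe.2 hne)
    have hu := (hconn u w).pos_dist_of_ne fun h => u.2 (h ▸ hw)
    have hv := (hconn v w).pos_dist_of_ne fun h => v.2 (h ▸ hw)
    have := congrArg Fin.val (congrFun huv ⟨w, hw⟩)
    simp only [f] at this
    omega
  have := Nat.card_le_card_of_injective f hf
  rw [Nat.card_fun, Nat.card_eq_fintype_card (α := Fin D), Fintype.card_fin,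
    Nat.card_coe_set_eq, Nat.card_coe_set_eq] at this
  have := Set.ncard_add_ncard_compl W
  omega

theorem metricDim_le_ncard {W : Set V} (hW : W.Finite) (hres : IsResolvingSet G W) :
    metricDim G ≤ W.ncard :=
  Nat.sInf_le ⟨W, hW, hres, rfl⟩

theorem le_metricDim {m : ℕ} (hne : ∃ W : Set V, W.Finite ∧ IsResolvingSet G W)
    (h : ∀ W : Set V, W.Finite → IsResolvingSet G W → m ≤ W.ncard) : m ≤ metricDim G := by
  obtain ⟨W, hW, hres⟩ := hne
  exact le_csInf ⟨_, W, hW, hres, rfl⟩ fun _ ⟨W, hW, hres, hm⟩ => hm ▸ h W hW hres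

end MetricDimension

section SmallBooleanCubes

def leadingAtoms (k : ℕ) : Finset {a : Fin k → Bool // a ≠ ⊥ ∧ a ≠ ⊤} :=
  Finset.univ.filter fun a => ∃ i : Fin k, i.1 + 1 < k ∧ a.1 = fun j => decide (j = i)

/-- The distance from `a` to the atom `{i}` is 2 or 3 according as `i ∈ a` or not, except that
it is 0 at `{i}` and 1 at `{i}ᶜ`; for `k ≤ 4` these exceptions separate `a` from `a ∪ {k - 1}`. -/
theorem leadingAtoms_card_and_isResolvingSet {k : ℕ} (hk2 : 2 ≤ k) (hk4 : k ≤ 4) :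
    (leadingAtoms k).card = k - 1 ∧
      IsResolvingSet (comaximalGraph (Fin k → Bool)) (leadingAtoms k) := by
  simp only [IsResolvingSet, comaximalGraph_dist, Finset.mem_coe]
  interval_cases k <;> decide

theorem card_comaximalGraph_vertices_fin_bool {k : ℕ} (hk2 : 2 ≤ k) (hk4 : k ≤ 4) :
    Nat.card {a : Fin k → Bool // a ≠ ⊥ ∧ a ≠ ⊤} = 2 ^ k - 2 := by
  rw [Nat.card_eq_fintype_card]
  interval_cases k <;> rfl

theorem metricDim_comaximalGraph_fin_bool {k : ℕ} (hk2 : 2 ≤ k) (hk4 : k ≤ 4) :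
    metricDim (comaximalGraph (Fin k → Bool)) = k - 1 := by
  obtain ⟨hcard, hres⟩ := leadingAtoms_card_and_isResolvingSet hk2 hk4
  refine le_antisymm ?_ (le_metricDim ⟨_, Finset.finite_toSet _, hres⟩ fun W _ hW => ?_)
  · simpa [hcard] using metricDim_le_ncard (Finset.finite_toSet _) hres
  · have hW3 := hW.card_le comaximalGraph_preconnected comaximalGraph_dist_le_three
    rw [card_comaximalGraph_vertices_fin_bool hk2 hk4] at hW3
    by_contra! hlt
    have : W.ncard ≤ 2 := by omega
    interval_cases W.ncard <;> interval_cases k <;> simp_all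

end SmallBooleanCubes

/-- For `n` a product of `k` distinct primes with `2 ≤ k ≤ 4`, the metric
dimension of the essential ideal graph of `ℤ/nℤ` is `k - 1`. -/
theorem stmt_4 (k : ℕ) (hk2 : 2 ≤ k) (hk4 : k ≤ 4) (p : Fin k → ℕ)
    (hp : ∀ i, (p i).Prime) (hinj : Function.Injective p)
    (n : ℕ) (hn : n = ∏ i, p i) :
    metricDim (essentialIdealGraph (ZMod n)) = k - 1 := by
  subst hn
  let F := ZMod.idealOrderIsoOfPrimes hp hinj
  have : Nonempty (Fin k) := ⟨⟨0, by omega⟩⟩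
  have : Nontrivial (Ideal (ZMod (∏ i, p i))) := F.toEquiv.nontrivial
  have : Nontrivial (ZMod (∏ i, p i)) := (Submodule.nontrivial_iff _).1 this
  have : ComplementedLattice (Ideal (ZMod (∏ i, p i))) := F.complementedLattice_iff.2 inferInstance
  rw [essentialIdealGraph_eq_comaximalGraph, metricDim_congr F.comaximalGraphIso]
  exact metricDim_comaximalGraph_fin_bool hk2 hk4
end

section
/- Let n = p_1 p_2 ⋯ p_k be a product of k ≥ 2 distinct primes and let I and J be two distinct nonzero proper ideals of Z_n = Z/nZ. Then the graph distance between I and J in the essential ideal graph E_{Z_n} equals 3 if and only if I + J ≠ Z_n and I ∩ J = 0. -/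
/-!
For squarefree `n` the ring `ZMod n` is reduced and Artinian, hence semisimple, so every ideal
has a complement. A proper ideal then has a nonzero complement, so the only essential ideal is
the whole ring and `I`, `J` are adjacent exactly when `I + J = R`. If `I ∩ J ≠ 0`, a complement
of `I ∩ J` is a common neighbour of `I` and `J`. If `I ∩ J = 0`, complements `I'`, `J'` give the
path `I - I' - J' - J`, and there is no common neighbour `W`: from `W + I = W + J = R` we get
`W + I J = R`, while `I J ⊆ I ∩ J = 0`.
-/

theorem Nat.squarefree_prod_of_injective_primes {ι : Type*} [Fintype ι] {p : ι → ℕ}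
    (hp : ∀ i, (p i).Prime) (hinj : Function.Injective p) : Squarefree (∏ i, p i) :=
  Finset.squarefree_prod_of_pairwise_isCoprime
    (fun i _ j _ hij ↦
      Nat.coprime_iff_isRelPrime.1 <| (Nat.coprime_primes (hp i) (hp j)).2 (hinj.ne hij))
    fun i _ ↦ (hp i).prime.squarefree

theorem ZMod.isSemisimpleRing_of_squarefree {n : ℕ} (hn : Squarefree n) :
    IsSemisimpleRing (ZMod n) :=
  have : NeZero n := ⟨hn.ne_zero⟩
  have : Fact (Squarefree n) := ⟨hn⟩
  IsArtinianRing.isSemisimpleRing_of_isReduced (ZMod n)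

theorem Ideal.sup_inf_eq_top_of_sup_eq_top {R : Type*} [CommRing R] {I J K : Ideal R}
    (hJ : I ⊔ J = ⊤) (hK : I ⊔ K = ⊤) : I ⊔ J ⊓ K = ⊤ :=
  have hJK := (isCoprime_iff_sup_eq.2 hJ).mul_right (isCoprime_iff_sup_eq.2 hK)
  eq_top_iff.2 <| (isCoprime_iff_sup_eq.1 hJK).ge.trans (sup_le_sup_left mul_le_inf I)

theorem IsEssentialIdeal.eq_top {R : Type*} [CommRing R] [ComplementedLattice (Ideal R)]
    {K : Ideal R} (hK : IsEssentialIdeal K) : K = ⊤ := by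
  obtain ⟨L, hKL⟩ := exists_isCompl K
  obtain rfl : L = ⊥ := by_contra fun hL ↦ hK.2 L hL hKL.inf_eq_bot
  simpa using hKL.sup_eq_top

theorem isEssentialIdeal_top {R : Type*} [CommRing R] [Nontrivial R] :
    IsEssentialIdeal (⊤ : Ideal R) :=
  ⟨top_ne_bot, fun J hJ ↦ by rwa [top_inf_eq]⟩

section

open SimpleGraph

variable {R : Type*} [CommRing R] [ComplementedLattice (Ideal R)]
  {I J : {I : Ideal R // I ≠ ⊥ ∧ I ≠ ⊤}}

theorem essentialIdealGraph_adj_iff : (essentialIdealGraph R).Adj I J ↔ I.1 ⊔ J.1 = ⊤ := by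
  have : Nontrivial R := not_subsingleton_iff_nontrivial.1 fun _ ↦ I.2.1 (Subsingleton.elim _ _)
  refine ⟨fun h ↦ h.2.eq_top, fun h ↦ ⟨?_, by rw [h]; exact isEssentialIdeal_top⟩⟩
  rintro rfl
  exact I.2.2 (by simpa using h)

theorem essentialIdealGraph_exists_isCompl {K : Ideal R} (hbot : K ≠ ⊥) (htop : K ≠ ⊤) :
    ∃ W : {I : Ideal R // I ≠ ⊥ ∧ I ≠ ⊤}, IsCompl K W.1 := by
  obtain ⟨L, hKL⟩ := exists_isCompl K
  refine ⟨⟨L, fun hL ↦ htop ?_, fun hL ↦ hbot ?_⟩, hKL⟩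
  · simpa [hL] using hKL.sup_eq_top
  · simpa [hL] using hKL.inf_eq_bot

theorem essentialIdealGraph_dist_le_two_of_inf_ne_bot (h : I.1 ⊓ J.1 ≠ ⊥) :
    (essentialIdealGraph R).dist I J ≤ 2 := by
  obtain ⟨W, hW⟩ := essentialIdealGraph_exists_isCompl h (ne_top_of_le_ne_top I.2.2 inf_le_left)
  have hIW : (essentialIdealGraph R).Adj I W :=
    essentialIdealGraph_adj_iff.2 <| top_unique <|
      hW.sup_eq_top.ge.trans <| sup_le_sup_right inf_le_left _
  have hWJ : (essentialIdealGraph R).Adj W J := by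
    rw [essentialIdealGraph_adj_iff, sup_comm]
    exact top_unique <| hW.sup_eq_top.ge.trans <| sup_le_sup_right inf_le_right _
  exact dist_le (.cons hIW (.cons hWJ .nil))

theorem essentialIdealGraph_commonNeighbors_eq_empty (h : I.1 ⊓ J.1 = ⊥) :
    (essentialIdealGraph R).commonNeighbors I J = ∅ := by
  ext W
  simp only [mem_commonNeighbors, essentialIdealGraph_adj_iff, Set.mem_empty_iff_false,
    iff_false]
  rintro ⟨hIW, hJW⟩
  rw [sup_comm] at hIW hJW
  exact W.2.2 (by simpa [h] using Ideal.sup_inf_eq_top_of_sup_eq_top hIW hJW)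

theorem essentialIdealGraph_dist_eq_three (hsup : I.1 ⊔ J.1 ≠ ⊤) (hinf : I.1 ⊓ J.1 = ⊥) :
    (essentialIdealGraph R).dist I J = 3 := by
  obtain ⟨I', hI'⟩ := essentialIdealGraph_exists_isCompl I.2.1 I.2.2
  obtain ⟨J', hJ'⟩ := essentialIdealGraph_exists_isCompl J.2.1 J.2.2
  have hI'J' : I'.1 ⊔ J'.1 = ⊤ := by
    have hI : I'.1 ⊔ J'.1 ⊔ I.1 = ⊤ :=
      top_unique <| hI'.sup_eq_top.ge.trans <| sup_le le_sup_right (le_sup_left.trans le_sup_left)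
    have hJ : I'.1 ⊔ J'.1 ⊔ J.1 = ⊤ :=
      top_unique <| hJ'.sup_eq_top.ge.trans <| sup_le le_sup_right (le_sup_right.trans le_sup_left)
    simpa [hinf] using Ideal.sup_inf_eq_top_of_sup_eq_top hI hJ
  have hJ'J : J'.1 ⊔ J.1 = ⊤ := sup_comm J.1 J'.1 ▸ hJ'.sup_eq_top
  let w : (essentialIdealGraph R).Walk I J :=
    .cons (essentialIdealGraph_adj_iff.2 hI'.sup_eq_top)
      (.cons (essentialIdealGraph_adj_iff.2 hI'J')
        (.cons (essentialIdealGraph_adj_iff.2 hJ'J) .nil))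
  have hIJ : I ≠ J := by
    rintro rfl
    exact I.2.1 (by simpa using hinf)
  have hgt : 2 < (essentialIdealGraph R).dist I J := by
    have := two_lt_edist_iff.2 ⟨hIJ, mt essentialIdealGraph_adj_iff.1 hsup,
      essentialIdealGraph_commonNeighbors_eq_empty hinf⟩
    rw [← Reachable.coe_dist_eq_edist ⟨w⟩] at this
    exact_mod_cast this
  have hle : (essentialIdealGraph R).dist I J ≤ 3 := dist_le w
  omega

theorem essentialIdealGraph_dist_eq_three_iff :
    (essentialIdealGraph R).dist I J = 3 ↔ I.1 ⊔ J.1 ≠ ⊤ ∧ I.1 ⊓ J.1 = ⊥ := by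
  refine ⟨fun h ↦ ⟨fun hsup ↦ ?_, by_contra fun hinf ↦ ?_⟩,
    fun h ↦ essentialIdealGraph_dist_eq_three h.1 h.2⟩
  · rw [dist_eq_one_iff_adj.2 (essentialIdealGraph_adj_iff.2 hsup)] at h
    omega
  · have := essentialIdealGraph_dist_le_two_of_inf_ne_bot hinf
    omega

end

theorem stmt_8_general (k : ℕ) (p : Fin k → ℕ)
    (hp : ∀ i, (p i).Prime) (hinj : Function.Injective p)
    (n : ℕ) (hn : n = ∏ i, p i)
    (I J : {I : Ideal (ZMod n) // I ≠ ⊥ ∧ I ≠ ⊤}) :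
    (essentialIdealGraph (ZMod n)).dist I J = 3 ↔
      (I.1 ⊔ J.1 ≠ ⊤ ∧ I.1 ⊓ J.1 = ⊥) := by
  have := ZMod.isSemisimpleRing_of_squarefree <|
    hn ▸ Nat.squarefree_prod_of_injective_primes hp hinj
  exact essentialIdealGraph_dist_eq_three_iff

/-- For `n` a product of `k ≥ 2` distinct primes and distinct nonzero proper
ideals `I`, `J` of `ℤ/nℤ`, the distance between `I` and `J` in the essential ideal graph
is `3` iff `I + J ≠ ℤ/nℤ` and `I ∩ J = 0`. -/
theorem stmt_8 (k : ℕ) (hk : 2 ≤ k) (p : Fin k → ℕ)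
    (hp : ∀ i, (p i).Prime) (hinj : Function.Injective p)
    (n : ℕ) (hn : n = ∏ i, p i)
    (I J : {I : Ideal (ZMod n) // I ≠ ⊥ ∧ I ≠ ⊤}) (hIJ : I ≠ J) :
    (essentialIdealGraph (ZMod n)).dist I J = 3 ↔
      (I.1 ⊔ J.1 ≠ ⊤ ∧ I.1 ⊓ J.1 = ⊥) :=
  stmt_8_general k p hp hinj n hn I J
end

section
/- Let n = p_1^{m_1} p_2^{m_2} ⋯ p_k^{m_k} with p_1 < p_2 < ⋯ < p_k primes, k ≥ 2, and m_i > 1 for at least one i, and let T = ∏_{i=1}^{k}(m_i + 1) − 2 be the number of nonzero proper ideals of Z_n = Z/nZ. Then every resolving set of the essential ideal graph E_{Z_n} has cardinality at least T − (2^k − 1). -/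
/-!
The minimal ideals of `ZMod n` are the ideals `(n / q)` for the primes `q ∣ n`, and every nonzero
ideal contains one of them. Since `n / q ∈ I` exactly when `I` is not contained in `(q ^ v_q(n))`,
the element `n / q` lies in `I ⊔ J` iff it lies in `I` or in `J`; and an ideal is essential iff it
contains all the minimal ideals. So adjacency in the essential ideal graph only depends on the
nonempty set of minimal ideals a vertex contains. Two vertices with the same set are swapped by
a graph automorphism fixing every other vertex, so a resolving set misses at most one vertex
with each of the `2 ^ k - 1` possible sets, out of the `∏ (mᵢ + 1) - 2` vertices.
-/

namespace SimpleGraph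

variable {V V' : Type*} {G : SimpleGraph V} {G' : SimpleGraph V'}

theorem Iso.dist_le (f : G ≃g G') (u v : V) : G'.dist (f u) (f v) ≤ G.dist u v := by
  by_cases h : G.Reachable u v
  · obtain ⟨w, hw⟩ := h.exists_walk_length_eq_dist
    calc G'.dist (f u) (f v) ≤ (w.map f.toHom).length := SimpleGraph.dist_le _
      _ = G.dist u v := by rw [Walk.length_map, hw]
  · rw [dist_eq_zero_of_not_reachable h,
      dist_eq_zero_of_not_reachable (mt Iso.reachable_iff.mp h)]

theorem Iso.dist_eq_s10 (f : G ≃g G') (u v : V) : G'.dist (f u) (f v) = G.dist u v :=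
  le_antisymm (f.dist_le u v) (by simpa using f.symm.dist_le (f u) (f v))

end SimpleGraph

theorem IsResolvingSet.injOn_compl {V α : Type*} {G : SimpleGraph V} {W : Set V} {f : V → α}
    {r : α → α → Prop} (hadj : ∀ u v, G.Adj u v ↔ u ≠ v ∧ r (f u) (f v))
    (hW : IsResolvingSet G W) : Set.InjOn f Wᶜ := by
  classical
  intro u hu v hv huv
  by_contra hne
  have hf : ∀ a, f (Equiv.swap u v a) = f a := by
    intro a
    rw [Equiv.swap_apply_def]
    split_ifs with hau hav
    · rw [hau, huv]
    · rw [hav, huv]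
    · rfl
  let σ : G ≃g G := ⟨Equiv.swap u v, fun {a b} => by
    rw [hadj, hadj, hf, hf, (Equiv.swap u v).injective.ne_iff]⟩
  obtain ⟨w, hw, hd⟩ := hW u v hne
  have hwu : w ≠ u := fun h => hu (h ▸ hw)
  have hwv : w ≠ v := fun h => hv (h ▸ hw)
  apply hd
  rw [← σ.dist_eq_s10 u w]
  simp [σ, Equiv.swap_apply_of_ne_of_ne hwu hwv]

theorem Nat.div_pos_of_mem_primeFactors {n q : ℕ} (hq : q ∈ n.primeFactors) : 0 < n / q :=
  Nat.div_pos (Nat.le_of_mem_primeFactors hq) (Nat.pos_of_mem_primeFactors hq)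

theorem Nat.dvd_div_iff_not_ordProj_dvd {n d q : ℕ} (hq : q ∈ n.primeFactors) (hd : d ∣ n) :
    d ∣ n / q ↔ ¬ q ^ n.factorization q ∣ d := by
  obtain ⟨hprime, hqn, hn⟩ := Nat.mem_primeFactors.mp hq
  have hd0 : d ≠ 0 := ne_zero_of_dvd_ne_zero hn hd
  constructor
  · intro hdq hqd
    apply Nat.pow_succ_factorization_not_dvd hn hprime
    have := Nat.mul_dvd_mul_right (hqd.trans hdq) q
    rwa [Nat.div_mul_cancel hqn, ← pow_succ] at this
  · intro hqd
    have hlt : d.factorization q < n.factorization q := by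
      rwa [hprime.pow_dvd_iff_le_factorization hd0, not_le] at hqd
    rw [← Nat.factorization_le_iff_dvd hd0 (Nat.div_pos_of_mem_primeFactors hq).ne',
      Nat.factorization_div hqn, hprime.factorization]
    intro r
    rw [Finsupp.tsub_apply, Finsupp.single_apply]
    split_ifs with hqr
    · subst hqr; omega
    · exact (Nat.factorization_le_iff_dvd hd0 hn).mpr hd r

theorem Nat.eq_of_div_dvd_div {n q r : ℕ} (hq : q ∈ n.primeFactors) (hr : r ∈ n.primeFactors)
    (h : n / q ∣ n / r) : q = r := by
  have : n / q * r ∣ n / q * q := by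
    rw [Nat.div_mul_cancel (Nat.dvd_of_mem_primeFactors hq)]
    exact (Nat.mul_dvd_mul_right h r).trans
      (Nat.div_mul_cancel (Nat.dvd_of_mem_primeFactors hr)).dvd
  exact ((Nat.prime_dvd_prime_iff_eq (Nat.prime_of_mem_primeFactors hr)
    (Nat.prime_of_mem_primeFactors hq)).mp
    (Nat.dvd_of_mul_dvd_mul_left (Nat.div_pos_of_mem_primeFactors hq) this)).symm

theorem Nat.card_divisors_prod_pow {ι : Type*} {s : Finset ι} {p m : ι → ℕ}
    (hp : ∀ i ∈ s, (p i).Prime) (hinj : Set.InjOn p s) :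
    (∏ i ∈ s, p i ^ m i).divisors.card = ∏ i ∈ s, (m i + 1) := by
  rw [← ArithmeticFunction.sigma_zero_apply,
    ArithmeticFunction.isMultiplicative_sigma.map_prod _ _ fun i hi j hj hij =>
      Nat.Coprime.pow _ _ ((Nat.coprime_primes (hp i hi) (hp j hj)).mpr (hinj.ne hi hj hij))]
  exact Finset.prod_congr rfl fun i hi => ArithmeticFunction.sigma_zero_apply_prime_pow (hp i hi)

theorem Nat.card_primeFactors_prod_pow_le {ι : Type*} {s : Finset ι} {p m : ι → ℕ}
    (hp : ∀ i ∈ s, (p i).Prime) : (∏ i ∈ s, p i ^ m i).primeFactors.card ≤ s.card := by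
  classical
  refine (Finset.card_le_card (t := s.image p) fun q hq => ?_).trans Finset.card_image_le
  have hq' := Nat.prime_of_mem_primeFactors hq
  obtain ⟨i, hi, hqi⟩ :=
    (Nat.prime_iff.mp hq').dvd_finsetProd_iff _ |>.mp (Nat.dvd_of_mem_primeFactors hq)
  exact Finset.mem_image.mpr ⟨i, hi, ((Nat.prime_dvd_prime_iff_eq hq' (hp i hi)).mp
    (hq'.dvd_of_dvd_pow hqi)).symm⟩

namespace ZMod

variable {n : ℕ}

theorem natCast_mem_span_natCast_iff {c d : ℕ} (hd : d ∣ n) :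
    (c : ZMod n) ∈ Ideal.span {(d : ZMod n)} ↔ d ∣ c := by
  rw [Ideal.mem_span_singleton]
  refine ⟨fun ⟨y, hy⟩ => ?_, fun h => Nat.cast_dvd_cast h⟩
  obtain ⟨t, rfl⟩ := ZMod.intCast_surjective y
  have hn : (n : ℤ) ∣ d * t - c := by
    rw [← ZMod.intCast_zmod_eq_zero_iff_dvd]
    push_cast
    rw [hy, sub_self]
  have : (d : ℤ) ∣ c := by
    simpa using dvd_sub (dvd_mul_right (d : ℤ) t) ((Int.natCast_dvd_natCast.mpr hd).trans hn)
  exact_mod_cast this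

theorem exists_dvd_and_eq_span (I : Ideal (ZMod n)) :
    ∃ d, d ∣ n ∧ I = Ideal.span {(d : ZMod n)} := by
  let f := Int.castRingHom (ZMod n)
  obtain ⟨g, hg⟩ := Submodule.IsPrincipal.principal (I.comap f)
  rw [Ideal.submodule_span_eq, ← Int.span_natAbs] at hg
  have hn : (n : ℤ) ∈ I.comap f := by simp [Ideal.mem_comap, f]
  rw [hg, Ideal.mem_span_singleton] at hn
  refine ⟨g.natAbs, by exact_mod_cast hn, ?_⟩
  rw [← Ideal.map_comap_of_surjective f ZMod.intCast_surjective I, hg, Ideal.map_span,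
    Set.image_singleton]
  simp [f]

theorem span_natCast_injOn :
    Set.InjOn (fun d : ℕ => Ideal.span {(d : ZMod n)}) {d | d ∣ n} := by
  intro d hd e he (h : Ideal.span _ = Ideal.span _)
  have hed : e ∣ d := (natCast_mem_span_natCast_iff he).mp (h ▸ Ideal.mem_span_singleton_self _)
  have hde : d ∣ e :=
    (natCast_mem_span_natCast_iff hd).mp (h.symm ▸ Ideal.mem_span_singleton_self _)
  exact Nat.dvd_antisymm hde hed

theorem natCast_div_mem_iff {q : ℕ} (hq : q ∈ n.primeFactors) {I : Ideal (ZMod n)} :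
    ((n / q : ℕ) : ZMod n) ∈ I ↔
      ¬ I ≤ Ideal.span {((q ^ n.factorization q : ℕ) : ZMod n)} := by
  obtain ⟨d, hd, rfl⟩ := exists_dvd_and_eq_span I
  rw [Ideal.span_singleton_le_iff_mem, natCast_mem_span_natCast_iff hd,
    natCast_mem_span_natCast_iff (Nat.ordProj_dvd n q), Nat.dvd_div_iff_not_ordProj_dvd hq hd]

theorem natCast_div_mem_sup_iff {q : ℕ} (hq : q ∈ n.primeFactors) {I J : Ideal (ZMod n)} :
    ((n / q : ℕ) : ZMod n) ∈ I ⊔ J ↔ ((n / q : ℕ) : ZMod n) ∈ I ∨ ((n / q : ℕ) : ZMod n) ∈ J := by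
  simp only [natCast_div_mem_iff hq, sup_le_iff, not_and_or]

theorem natCast_div_ne_zero {q : ℕ} (hq : q ∈ n.primeFactors) : ((n / q : ℕ) : ZMod n) ≠ 0 := by
  rw [Ne, ZMod.natCast_eq_zero_iff]
  exact Nat.not_dvd_of_pos_of_lt (Nat.div_pos_of_mem_primeFactors hq)
    (Nat.div_lt_self (Nat.pos_of_mem_primeFactors hq |>.trans_le (Nat.le_of_mem_primeFactors hq))
      (Nat.prime_of_mem_primeFactors hq).one_lt)

theorem exists_natCast_div_mem [NeZero n] {I : Ideal (ZMod n)} (hI : I ≠ ⊥) :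
    ∃ q ∈ n.primeFactors, ((n / q : ℕ) : ZMod n) ∈ I := by
  obtain ⟨d, ⟨e, he⟩, rfl⟩ := exists_dvd_and_eq_span I
  have he1 : e ≠ 1 := by
    rintro rfl
    rw [mul_one] at he
    exact hI (by rw [Ideal.span_singleton_eq_bot, ← he, ZMod.natCast_self])
  obtain ⟨q, hq, hqe⟩ := Nat.exists_prime_and_dvd he1
  refine ⟨q, hq.mem_primeFactors (he ▸ dvd_mul_of_dvd_right hqe d) (NeZero.ne n), ?_⟩
  rw [natCast_mem_span_natCast_iff ⟨e, he⟩, he, Nat.mul_div_assoc d hqe]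
  exact dvd_mul_right d _

theorem isEssentialIdeal_iff [NeZero n] {I : Ideal (ZMod n)} :
    IsEssentialIdeal I ↔ I ≠ ⊥ ∧ ∀ q ∈ n.primeFactors, ((n / q : ℕ) : ZMod n) ∈ I := by
  refine ⟨fun ⟨hI, hess⟩ => ⟨hI, fun q hq => ?_⟩, fun ⟨hI, hmem⟩ => ⟨hI, fun J hJ => ?_⟩⟩
  · have hspan : Ideal.span {((n / q : ℕ) : ZMod n)} ≠ ⊥ := by
      rw [Ne, Ideal.span_singleton_eq_bot]
      exact natCast_div_ne_zero hq
    obtain ⟨r, hr, hrI, hrq⟩ := exists_natCast_div_mem (hess _ hspan)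
    rw [SetLike.mem_coe, natCast_mem_span_natCast_iff
      (Nat.div_dvd_of_dvd (Nat.dvd_of_mem_primeFactors hq))] at hrq
    obtain rfl := Nat.eq_of_div_dvd_div hq hr hrq
    exact hrI
  · obtain ⟨q, hq, hqJ⟩ := exists_natCast_div_mem hJ
    exact (Submodule.ne_bot_iff _).mpr ⟨_, Submodule.mem_inf.mpr ⟨hmem q hq, hqJ⟩,
      natCast_div_ne_zero hq⟩

theorem card_divisors_sub_two_le_card [NeZero n] :
    n.divisors.card - 2 ≤ Nat.card {I : Ideal (ZMod n) // I ≠ ⊥ ∧ I ≠ ⊤} := by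
  classical
  have hspan : ∀ d ∈ n.divisors \ {1, n},
      Ideal.span {(d : ZMod n)} ≠ ⊥ ∧ Ideal.span {(d : ZMod n)} ≠ ⊤ := by
    intro d hd
    simp only [Finset.mem_sdiff, Nat.mem_divisors, Finset.mem_insert, Finset.mem_singleton,
      not_or] at hd
    obtain ⟨⟨hdn, -⟩, hd1, hdn'⟩ := hd
    constructor
    · rw [Ne, Ideal.span_singleton_eq_bot, ZMod.natCast_eq_zero_iff]
      exact fun h => hdn' (Nat.dvd_antisymm hdn h)
    · rw [Ne, Ideal.eq_top_iff_one, ← Nat.cast_one, natCast_mem_span_natCast_iff hdn, Nat.dvd_one]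
      exact hd1
  let f : (n.divisors \ {1, n} : Finset ℕ) → {I : Ideal (ZMod n) // I ≠ ⊥ ∧ I ≠ ⊤} :=
    fun d => ⟨_, hspan d d.2⟩
  have hf : Function.Injective f := fun d e h =>
    Subtype.ext (span_natCast_injOn
      (Nat.dvd_of_mem_divisors (Finset.mem_sdiff.mp d.2).1)
      (Nat.dvd_of_mem_divisors (Finset.mem_sdiff.mp e.2).1) (congrArg Subtype.val h))
  calc n.divisors.card - 2 ≤ (n.divisors \ {1, n}).card := by
        have := Finset.card_le_card_sdiff_add_card (s := n.divisors) (t := {1, n})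
        have := Finset.card_le_two (a := 1) (b := n)
        omega
    _ = Nat.card (n.divisors \ {1, n} : Finset ℕ) := (Nat.card_eq_finsetCard _).symm
    _ ≤ _ := Nat.card_le_card_of_injective f hf

open scoped Classical in
/-- The primes `q ∣ n` whose minimal ideal `(n / q)` lies in `I`. -/
noncomputable def socleSupport (I : Ideal (ZMod n)) : Finset ℕ :=
  n.primeFactors.filter fun q => ((n / q : ℕ) : ZMod n) ∈ I

theorem mem_socleSupport {I : Ideal (ZMod n)} {q : ℕ} :
    q ∈ socleSupport I ↔ q ∈ n.primeFactors ∧ ((n / q : ℕ) : ZMod n) ∈ I := by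
  simp only [socleSupport, Finset.mem_filter]

theorem essentialIdealGraph_adj_iff [NeZero n] {I J : {I : Ideal (ZMod n) // I ≠ ⊥ ∧ I ≠ ⊤}} :
    (essentialIdealGraph (ZMod n)).Adj I J ↔
      I ≠ J ∧ n.primeFactors ⊆ socleSupport I.1 ∪ socleSupport J.1 := by
  refine and_congr_right fun _ => ?_
  rw [isEssentialIdeal_iff]
  refine ⟨fun ⟨_, h⟩ q hq => ?_, fun h => ⟨ne_bot_of_le_ne_bot I.2.1 le_sup_left, fun q hq => ?_⟩⟩
  · rcases (natCast_div_mem_sup_iff hq).mp (h q hq) with hI | hJ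
    · exact Finset.mem_union_left _ (mem_socleSupport.mpr ⟨hq, hI⟩)
    · exact Finset.mem_union_right _ (mem_socleSupport.mpr ⟨hq, hJ⟩)
  · rcases Finset.mem_union.mp (h hq) with hI | hJ
    · exact (natCast_div_mem_sup_iff hq).mpr (Or.inl (mem_socleSupport.mp hI).2)
    · exact (natCast_div_mem_sup_iff hq).mpr (Or.inr (mem_socleSupport.mp hJ).2)

theorem card_divisors_sub_le_ncard_of_isResolvingSet [NeZero n]
    {W : Set {I : Ideal (ZMod n) // I ≠ ⊥ ∧ I ≠ ⊤}}
    (hW : IsResolvingSet (essentialIdealGraph (ZMod n)) W) :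
    n.divisors.card - 2 - (2 ^ n.primeFactors.card - 1) ≤ W.ncard := by
  have hinj : Set.InjOn (fun I => socleSupport I.1) Wᶜ :=
    hW.injOn_compl (r := fun s t => n.primeFactors ⊆ s ∪ t) fun _ _ => essentialIdealGraph_adj_iff
  have hsupp : ∀ I : {I : Ideal (ZMod n) // I ≠ ⊥ ∧ I ≠ ⊤},
      socleSupport I.1 ∈ n.primeFactors.powerset.erase ∅ := by
    intro I
    obtain ⟨q, hq, hqI⟩ := exists_natCast_div_mem I.2.1
    exact Finset.mem_erase.mpr ⟨Finset.ne_empty_of_mem (mem_socleSupport.mpr ⟨hq, hqI⟩),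
      Finset.mem_powerset.mpr fun _ hr => (mem_socleSupport.mp hr).1⟩
  have hcompl : Wᶜ.ncard ≤ 2 ^ n.primeFactors.card - 1 :=
    calc Wᶜ.ncard ≤ (↑(n.primeFactors.powerset.erase ∅) : Set (Finset ℕ)).ncard :=
          Set.ncard_le_ncard_of_injOn _ (fun I _ => hsupp I) hinj
      _ = 2 ^ n.primeFactors.card - 1 := by
          rw [Set.ncard_coe_finset, Finset.card_erase_of_mem (Finset.empty_mem_powerset _),
            Finset.card_powerset]
  have hsplit := Set.ncard_add_ncard_compl W
  have hvertices := card_divisors_sub_two_le_card (n := n)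
  omega

end ZMod

theorem stmt_10_general (k : ℕ) (p : Fin k → ℕ) (m : Fin k → ℕ)
    (hp : ∀ i, (p i).Prime) (hmono : StrictMono p)
    (n : ℕ) (hn : n = ∏ i, p i ^ m i)
    (T : ℕ) (hT : T = (∏ i, (m i + 1)) - 2)
    (W : Set {I : Ideal (ZMod n) // I ≠ ⊥ ∧ I ≠ ⊤})
    (hW : IsResolvingSet (essentialIdealGraph (ZMod n)) W) :
    T - (2 ^ k - 1) ≤ W.ncard := by
  have : NeZero n := ⟨hn ▸ Finset.prod_ne_zero_iff.mpr fun i _ => pow_ne_zero _ (hp i).ne_zero⟩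
  have hdivisors : n.divisors.card = ∏ i, (m i + 1) :=
    hn ▸ Nat.card_divisors_prod_pow (fun i _ => hp i) hmono.injective.injOn
  have hprimeFactors : n.primeFactors.card ≤ k := by
    simpa [hn] using Nat.card_primeFactors_prod_pow_le (s := Finset.univ) (m := m) fun i _ => hp i
  have hpow := Nat.pow_le_pow_right two_pos hprimeFactors
  have hbound := ZMod.card_divisors_sub_le_ncard_of_isResolvingSet hW
  omega

/-- For `n = p₁^{m₁} ⋯ p_k^{m_k}` with `k ≥ 2` distinct primes and some
`mᵢ > 1`, every resolving set of the essential ideal graph of `ℤ/nℤ` has cardinality at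
least `T - (2^k - 1)`, where `T = ∏ (mᵢ + 1) - 2`. -/
theorem stmt_10 (k : ℕ) (hk : 2 ≤ k) (p : Fin k → ℕ) (m : Fin k → ℕ)
    (hp : ∀ i, (p i).Prime) (hmono : StrictMono p)
    (hm : ∀ i, 1 ≤ m i) (hsome : ∃ i, 1 < m i)
    (n : ℕ) (hn : n = ∏ i, p i ^ m i)
    (T : ℕ) (hT : T = (∏ i, (m i + 1)) - 2)
    (W : Set {I : Ideal (ZMod n) // I ≠ ⊥ ∧ I ≠ ⊤})
    (hW : IsResolvingSet (essentialIdealGraph (ZMod n)) W) :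
    T - (2 ^ k - 1) ≤ W.ncard :=
  stmt_10_general k p m hp hmono n hn T hT W hW
end

section
/- Let n = p_1^{m_1} p_2^{m_2} where p_1 < p_2 are primes and m_1 > 1 and m_2 > 1. Then the metric dimension of the essential ideal graph E_{Z_n} of Z_n = Z/nZ equals m_1 m_2 + m_1 + m_2 − 4. -/
/-!
Write `q₁ = p₁ ^ m₁` and `q₂ = p₂ ^ m₂`. Every ideal of `ℤ/q₁q₂` is `(d)` for a unique `d ∣ q₁q₂`,
and `(d) ⊓ (e) = (lcm d e)`; in particular `(q₁) ⊓ (q₂) = 0`. An ideal is therefore essential iff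
it lies in neither `(q₁)` nor `(q₂)`, so in the essential ideal graph the `m₂` vertices below `(q₁)`
and the `m₁` vertices below `(q₂)` form two independent sets, and every other vertex is adjacent to
all vertices. In such a graph all distances are `1` or `2` and two vertices of one class are twins,
so a resolving set omits at most one vertex of each of the three classes, and omitting one
representative of each class resolves. As `q₁q₂` has `(m₁ + 1)(m₂ + 1)` divisors, the metric
dimension is `(m₁ + 1)(m₂ + 1) - 2 - 3`.
-/

namespace SimpleGraph

variable {V ι : Type*} {G : SimpleGraph V} {c : V → Option ι}

/- `G` is the complete multipartite graph whose parts are the fibres `c ⁻¹' {some i}` and the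
singletons inside `c ⁻¹' {none}`. -/
def IsCompleteMultipartiteBy (G : SimpleGraph V) (c : V → Option ι) : Prop :=
  ∀ u v, G.Adj u v ↔ u ≠ v ∧ (c u = c v → c u = none)

open Classical in
theorem IsCompleteMultipartiteBy.dist_eq (hG : G.IsCompleteMultipartiteBy c)
    (hnone : ∃ z, c z = none) {u v : V} (huv : u ≠ v) :
    G.dist u v = if c u = c v ∧ c u ≠ none then 2 else 1 := by
  split_ifs with h
  · -- a vertex of class `none` is a common neighbour
    obtain ⟨z, hz⟩ := hnone
    have huz : G.Adj u z := (hG u z).2 ⟨by rintro rfl; exact h.2 hz, by simp [hz]⟩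
    have hzv : G.Adj z v := (hG z v).2 ⟨by rintro rfl; exact h.2 (h.1.trans hz), fun _ => hz⟩
    have hle : G.dist u v ≤ 2 := dist_le (huz.toWalk.append hzv.toWalk)
    have hpos : 0 < G.dist u v := (huz.reachable.trans hzv.reachable).pos_dist_of_ne huv
    have hne : G.dist u v ≠ 1 := fun h1 => h.2 (((hG u v).1 (dist_eq_one_iff_adj.1 h1)).2 h.1)
    omega
  · exact dist_eq_one_iff_adj.2 ((hG u v).2 ⟨huv, fun hc => by_contra fun hn => h ⟨hc, hn⟩⟩)

theorem IsCompleteMultipartiteBy.dist_ne_zero (hG : G.IsCompleteMultipartiteBy c)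
    (hnone : ∃ z, c z = none) {u v : V} (huv : u ≠ v) : G.dist u v ≠ 0 := by
  rw [hG.dist_eq hnone huv]
  split_ifs <;> decide

theorem IsCompleteMultipartiteBy.injOn_compl_of_isResolvingSet
    (hG : G.IsCompleteMultipartiteBy c) (hnone : ∃ z, c z = none) {W : Set V}
    (hW : IsResolvingSet G W) : Set.InjOn c Wᶜ := by
  intro u hu v hv hcuv
  by_contra huv
  obtain ⟨w, hw, hdist⟩ := hW u v huv
  have hwu : u ≠ w := by rintro rfl; exact hu hw
  have hwv : v ≠ w := by rintro rfl; exact hv hw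
  rw [hG.dist_eq hnone hwu, hG.dist_eq hnone hwv, hcuv] at hdist
  exact hdist rfl

theorem IsCompleteMultipartiteBy.isResolvingSet_compl_range (hG : G.IsCompleteMultipartiteBy c)
    (hnone : ∃ z, c z = none) (hpart : ∀ i, ∃ u v, u ≠ v ∧ c u = some i ∧ c v = some i)
    {r : Option ι → V} (hr : ∀ k, c (r k) = k) : IsResolvingSet G (Set.range r)ᶜ := by
  -- the representative of a class `some i` is at distance `2` from the other members of its class
  have hsep : ∀ i v, c v ≠ some i → ∃ w ∈ (Set.range r)ᶜ, G.dist (r (some i)) w ≠ G.dist v w := by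
    intro i v hv
    obtain ⟨w, hw, hwr⟩ : ∃ w, c w = some i ∧ w ≠ r (some i) := by
      obtain ⟨a, b, hab, ha, hb⟩ := hpart i
      by_cases har : a = r (some i)
      · exact ⟨b, hb, fun hbr => hab (har.trans hbr.symm)⟩
      · exact ⟨a, ha, har⟩
    refine ⟨w, ?_, ?_⟩
    · rintro ⟨k, rfl⟩
      rw [hr] at hw
      exact hwr (by rw [hw])
    · have hvw : v ≠ w := by rintro rfl; exact hv hw
      rw [hG.dist_eq hnone (Ne.symm hwr), hG.dist_eq hnone hvw, hr, hw]
      simp [hv]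
  intro u v huv
  by_cases hu : u ∈ (Set.range r)ᶜ
  · exact ⟨u, hu, by rw [dist_self]; exact (hG.dist_ne_zero hnone huv.symm).symm⟩
  by_cases hv : v ∈ (Set.range r)ᶜ
  · exact ⟨v, hv, by rw [dist_self]; exact hG.dist_ne_zero hnone huv⟩
  obtain ⟨a, rfl⟩ := Set.not_notMem.1 hu
  obtain ⟨b, rfl⟩ := Set.not_notMem.1 hv
  have hab : a ≠ b := fun h => huv (h ▸ rfl)
  cases a with
  | some i => exact hsep i (r b) (by rw [hr]; exact hab.symm)
  | none =>
    obtain ⟨j, rfl⟩ := Option.ne_none_iff_exists'.1 hab.symm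
    obtain ⟨w, hw, hd⟩ := hsep j (r none) (by rw [hr]; exact hab)
    exact ⟨w, hw, hd.symm⟩

theorem IsCompleteMultipartiteBy.metricDim_eq [Finite V] [Finite ι]
    (hG : G.IsCompleteMultipartiteBy c) (hnone : ∃ z, c z = none)
    (hpart : ∀ i, ∃ u v, u ≠ v ∧ c u = some i ∧ c v = some i) :
    metricDim G = Nat.card V - Nat.card (Option ι) := by
  have hc : Function.Surjective c := by
    rintro (_ | i)
    · exact hnone
    · obtain ⟨u, -, -, hu, -⟩ := hpart i
      exact ⟨u, hu⟩
  have hres := hG.isResolvingSet_compl_range hnone hpart (Function.surjInv_eq hc)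
  have hcard : (Set.range (Function.surjInv hc))ᶜ.ncard = Nat.card V - Nat.card (Option ι) := by
    rw [Set.ncard_compl, Set.ncard_range_of_injective (Function.injective_surjInv hc)]
  refine le_antisymm (Nat.sInf_le ⟨_, Set.toFinite _, hres, hcard⟩) ?_
  refine le_csInf ⟨_, _, Set.toFinite _, hres, hcard⟩ ?_
  rintro _ ⟨W, -, hW, rfl⟩
  have hcompl : Wᶜ.ncard ≤ Nat.card (Option ι) := by
    rw [← Set.ncard_univ]
    exact Set.ncard_le_ncard_of_injOn c (fun _ _ => Set.mem_univ _)
      (hG.injOn_compl_of_isResolvingSet hnone hW)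
  have := Set.ncard_add_ncard_compl W
  omega

end SimpleGraph

theorem natCard_ne_bot_and_ne_top {α : Type*} [LE α] [BoundedOrder α] [Finite α]
    (h : (⊥ : α) ≠ ⊤) : Nat.card {a : α // a ≠ ⊥ ∧ a ≠ ⊤} = Nat.card α - 2 := by
  have : {a : α | a ≠ ⊥ ∧ a ≠ ⊤} = {⊥, ⊤}ᶜ := by ext; simp
  rw [← Set.coe_ofPred, Nat.card_coe_set_eq, this, Set.ncard_compl, Set.ncard_pair h]

theorem IsPrimePow.dvd_or_dvd_of_dvd_lcm {q a b : ℕ} (hq : IsPrimePow q) (ha : a ≠ 0)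
    (hb : b ≠ 0) (h : q ∣ a.lcm b) : q ∣ a ∨ q ∣ b := by
  obtain ⟨p, k, hp, -, rfl⟩ := (isPrimePow_nat_iff q).1 hq
  rw [hp.pow_dvd_iff_le_factorization (Nat.lcm_ne_zero ha hb), Nat.factorization_lcm ha hb,
    Finsupp.sup_apply, le_sup_iff] at h
  rwa [hp.pow_dvd_iff_le_factorization ha, hp.pow_dvd_iff_le_factorization hb]

theorem IsEssentialIdeal.not_le_of_inf_eq_bot {R : Type*} [CommRing R] {K E F : Ideal R}
    (hK : IsEssentialIdeal K) (hEF : E ⊓ F = ⊥) (hF : F ≠ ⊥) : ¬K ≤ E :=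
  fun h => hK.2 F hF (le_bot_iff.1 (hEF ▸ inf_le_inf_right F h))

section BelowClass

variable {R : Type*} [CommRing R] {E₁ E₂ : Ideal R}

open Classical in
noncomputable def belowClass (E₁ E₂ I : Ideal R) : Option (Fin 2) :=
  if I ≤ E₁ then some 0 else if I ≤ E₂ then some 1 else none

theorem not_le_and_le_of_inf_eq_bot (hE : E₁ ⊓ E₂ = ⊥) {I : Ideal R} (hI : I ≠ ⊥) :
    ¬(I ≤ E₁ ∧ I ≤ E₂) :=
  fun h => hI (le_bot_iff.1 (hE ▸ le_inf h.1 h.2))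

theorem belowClass_eq_some_zero_iff {I : Ideal R} : belowClass E₁ E₂ I = some 0 ↔ I ≤ E₁ := by
  unfold belowClass
  split_ifs <;> simp_all

theorem belowClass_eq_some_one_iff (hE : E₁ ⊓ E₂ = ⊥) {I : Ideal R} (hI : I ≠ ⊥) :
    belowClass E₁ E₂ I = some 1 ↔ I ≤ E₂ := by
  have := not_le_and_le_of_inf_eq_bot hE hI
  unfold belowClass
  split_ifs <;> simp_all

theorem belowClass_eq_none_iff {I : Ideal R} :
    belowClass E₁ E₂ I = none ↔ ¬I ≤ E₁ ∧ ¬I ≤ E₂ := by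
  unfold belowClass
  split_ifs <;> simp_all

theorem isCompleteMultipartiteBy_essentialIdealGraph (hE : E₁ ⊓ E₂ = ⊥)
    (hess : ∀ K, IsEssentialIdeal K ↔ ¬K ≤ E₁ ∧ ¬K ≤ E₂) :
    (essentialIdealGraph R).IsCompleteMultipartiteBy fun I => belowClass E₁ E₂ I.1 := by
  intro I J
  have hI := not_le_and_le_of_inf_eq_bot hE I.2.1
  have hJ := not_le_and_le_of_inf_eq_bot hE J.2.1
  change I ≠ J ∧ IsEssentialIdeal (I.1 ⊔ J.1) ↔ _
  rw [hess, sup_le_iff, sup_le_iff]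
  simp only [belowClass]
  split_ifs <;> simp_all

end BelowClass

namespace ZMod

section Divisors

variable {n : ℕ}

theorem natCast_dvd_natCast_iff_of_dvd {d a : ℕ} (hd : d ∣ n) :
    (d : ZMod n) ∣ (a : ZMod n) ↔ d ∣ a := by
  refine ⟨fun h => ?_, Nat.cast_dvd_cast⟩
  have h' := map_dvd (castHom hd (ZMod d)) h
  rwa [map_natCast, map_natCast, natCast_self, zero_dvd_iff, natCast_eq_zero_iff] at h'

theorem span_natCast_le_span_natCast_iff {d e : ℕ} (he : e ∣ n) :
    Ideal.span {(d : ZMod n)} ≤ Ideal.span {(e : ZMod n)} ↔ e ∣ d := by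
  rw [Ideal.span_singleton_le_span_singleton, natCast_dvd_natCast_iff_of_dvd he]

theorem span_natCast_eq_bot_iff {d : ℕ} (hd : d ∣ n) : Ideal.span {(d : ZMod n)} = ⊥ ↔ d = n := by
  rw [← span_natCast_injOn.eq_iff hd (dvd_refl n)]
  simp

theorem span_natCast_eq_top_iff {d : ℕ} (hd : d ∣ n) : Ideal.span {(d : ZMod n)} = ⊤ ↔ d = 1 := by
  rw [← span_natCast_injOn.eq_iff hd (one_dvd n)]
  simp

theorem mem_span_natCast_iff [NeZero n] {d : ℕ} (hd : d ∣ n) {x : ZMod n} :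
    x ∈ Ideal.span {(d : ZMod n)} ↔ d ∣ x.val := by
  rw [Ideal.mem_span_singleton, ← natCast_dvd_natCast_iff_of_dvd hd, natCast_zmod_val]

theorem span_natCast_inf_span_natCast [NeZero n] {d e : ℕ} (hd : d ∣ n) (he : e ∣ n) :
    Ideal.span {(d : ZMod n)} ⊓ Ideal.span {(e : ZMod n)} = Ideal.span {(d.lcm e : ZMod n)} := by
  ext x
  rw [Submodule.mem_inf, mem_span_natCast_iff hd, mem_span_natCast_iff he,
    mem_span_natCast_iff (Nat.lcm_dvd hd he), Nat.lcm_dvd_iff]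

theorem exists_dvd_and_eq_span_natCast [NeZero n] (I : Ideal (ZMod n)) :
    ∃ d, d ∣ n ∧ I = Ideal.span {(d : ZMod n)} := by
  have : IsPrincipalIdealRing (ZMod n) :=
    IsPrincipalIdealRing.of_surjective (Int.castRingHom (ZMod n)) intCast_surjective
  obtain ⟨x, rfl⟩ := IsPrincipalIdealRing.principal I
  refine ⟨x.val.gcd n, Nat.gcd_dvd_right _ _, le_antisymm ?_ ?_⟩
  · rw [Submodule.span_le, Set.singleton_subset_iff, SetLike.mem_coe,
      mem_span_natCast_iff (Nat.gcd_dvd_right _ _)]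
    exact Nat.gcd_dvd_left _ _
  · rw [Ideal.span_singleton_le_span_singleton]
    -- Bézout: `gcd (x.val, n) = x.val * a + n * b`, and `n = 0` in `ZMod n`.
    refine ⟨(x.val.gcdA n : ZMod n), ?_⟩
    have h := congrArg (fun z : ℤ => (z : ZMod n)) (Nat.gcd_eq_gcd_ab x.val n)
    push_cast at h
    rwa [natCast_zmod_val, natCast_self, zero_mul, add_zero] at h

theorem natCard_ideal [NeZero n] : Nat.card (Ideal (ZMod n)) = n.divisors.card := by
  rw [← Nat.card_eq_finsetCard]
  symm
  refine Nat.card_eq_of_bijective (fun d => Ideal.span {((d : ℕ) : ZMod n)}) ⟨?_, ?_⟩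
  · intro d e h
    exact Subtype.ext (span_natCast_injOn (Nat.dvd_of_mem_divisors d.2)
      (Nat.dvd_of_mem_divisors e.2) h)
  · intro I
    obtain ⟨d, hd, rfl⟩ := exists_dvd_and_eq_span_natCast I
    exact ⟨⟨d, Nat.mem_divisors.2 ⟨hd, NeZero.ne n⟩⟩, rfl⟩

theorem natCard_nonzero_proper_ideal [NeZero n] (hn : n ≠ 1) :
    Nat.card {I : Ideal (ZMod n) // I ≠ ⊥ ∧ I ≠ ⊤} = n.divisors.card - 2 := by
  have := nontrivial_iff.2 hn
  rw [natCard_ne_bot_and_ne_top bot_ne_top, natCard_ideal]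

theorem span_natCast_ne_bot_and_ne_top {d : ℕ} (hd : d ∣ n) (hd1 : d ≠ 1) (hdn : d ≠ n) :
    Ideal.span {(d : ZMod n)} ≠ ⊥ ∧ Ideal.span {(d : ZMod n)} ≠ ⊤ :=
  ⟨mt (span_natCast_eq_bot_iff hd).1 hdn, mt (span_natCast_eq_top_iff hd).1 hd1⟩

theorem exists_ne_le_span_natCast {a d : ℕ} (hadn : a * d ∣ n) (ha : a ≠ 1) (hd : d ≠ 1)
    (hne : a * d ≠ n) : ∃ I J : {I : Ideal (ZMod n) // I ≠ ⊥ ∧ I ≠ ⊤},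
      I ≠ J ∧ I.1 ≤ Ideal.span {(a : ZMod n)} ∧ J.1 ≤ Ideal.span {(a : ZMod n)} := by
  have ha0 : a ≠ 0 := by
    rintro rfl
    exact hne (by simpa [eq_comm] using hadn)
  have han : a ∣ n := (dvd_mul_right a d).trans hadn
  have hle : Ideal.span {((a * d : ℕ) : ZMod n)} ≤ Ideal.span {(a : ZMod n)} :=
    (span_natCast_le_span_natCast_iff han).2 (dvd_mul_right a d)
  have had := span_natCast_ne_bot_and_ne_top hadn
    (fun h => ha (Nat.eq_one_of_mul_eq_one_right h)) hne
  refine ⟨⟨_, fun h => had.1 (le_bot_iff.1 (h ▸ hle)), mt (span_natCast_eq_top_iff han).1 ha⟩,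
    ⟨_, had⟩, fun h => hd ?_, le_rfl, hle⟩
  exact (Nat.mul_eq_left ha0).1 (span_natCast_injOn han hadn (congrArg Subtype.val h)).symm

end Divisors

section TwoPrimePowers

variable {q₁ q₂ : ℕ}

theorem span_natCast_inf_span_natCast_eq_bot [NeZero (q₁ * q₂)] (hcop : q₁.Coprime q₂) :
    Ideal.span {(q₁ : ZMod (q₁ * q₂))} ⊓ Ideal.span {(q₂ : ZMod (q₁ * q₂))} = ⊥ := by
  rw [span_natCast_inf_span_natCast (dvd_mul_right _ _) (dvd_mul_left _ _), hcop.lcm_eq_mul]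
  simp

theorem isEssentialIdeal_iff_s14 (h₁ : IsPrimePow q₁) (h₂ : IsPrimePow q₂) (hcop : q₁.Coprime q₂)
    (K : Ideal (ZMod (q₁ * q₂))) :
    IsEssentialIdeal K ↔
      ¬K ≤ Ideal.span {(q₁ : ZMod (q₁ * q₂))} ∧ ¬K ≤ Ideal.span {(q₂ : ZMod (q₁ * q₂))} := by
  have : NeZero (q₁ * q₂) := ⟨Nat.mul_ne_zero h₁.ne_zero h₂.ne_zero⟩
  have hd₁ : q₁ ∣ q₁ * q₂ := dvd_mul_right _ _
  have hd₂ : q₂ ∣ q₁ * q₂ := dvd_mul_left _ _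
  have hinf := span_natCast_inf_span_natCast_eq_bot hcop
  constructor
  · intro hK
    refine ⟨hK.not_le_of_inf_eq_bot hinf ?_, hK.not_le_of_inf_eq_bot (by rwa [inf_comm]) ?_⟩
    · rw [Ne, span_natCast_eq_bot_iff hd₂]
      exact fun h => h₁.ne_one ((Nat.mul_eq_right h₂.ne_zero).1 h.symm)
    · rw [Ne, span_natCast_eq_bot_iff hd₁]
      exact fun h => h₂.ne_one ((Nat.mul_eq_left h₁.ne_zero).1 h.symm)
  · rintro ⟨hK₁, hK₂⟩
    obtain ⟨d, hd, rfl⟩ := exists_dvd_and_eq_span_natCast K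
    rw [span_natCast_le_span_natCast_iff hd₁] at hK₁
    rw [span_natCast_le_span_natCast_iff hd₂] at hK₂
    have hd0 : d ≠ 0 := by rintro rfl; exact hK₁ (dvd_zero _)
    refine ⟨fun h => hK₁ ((span_natCast_eq_bot_iff hd).1 h ▸ hd₁), fun J hJ hKJ => hJ ?_⟩
    obtain ⟨e, he, rfl⟩ := exists_dvd_and_eq_span_natCast J
    have he0 : e ≠ 0 := by rintro rfl; exact NeZero.ne _ (Nat.eq_zero_of_zero_dvd he)
    rw [span_natCast_inf_span_natCast hd he, span_natCast_eq_bot_iff (Nat.lcm_dvd hd he)] at hKJ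
    have he₁ := (h₁.dvd_or_dvd_of_dvd_lcm hd0 he0 (hKJ ▸ hd₁)).resolve_left hK₁
    have he₂ := (h₂.dvd_or_dvd_of_dvd_lcm hd0 he0 (hKJ ▸ hd₂)).resolve_left hK₂
    rw [span_natCast_eq_bot_iff he]
    exact Nat.dvd_antisymm he (hcop.mul_dvd_of_dvd_of_dvd he₁ he₂)

theorem exists_belowClass_eq_none (hq₂ : q₂ ≠ 1) (hcop : q₁.Coprime q₂) {d : ℕ} (hd : d ∣ q₁)
    (hd1 : d ≠ 1) (hdq : d ≠ q₁) : ∃ I : {I : Ideal (ZMod (q₁ * q₂)) // I ≠ ⊥ ∧ I ≠ ⊤},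
      belowClass (Ideal.span {(q₁ : ZMod (q₁ * q₂))}) (Ideal.span {(q₂ : ZMod (q₁ * q₂))}) I.1
        = none := by
  have hq₂d : ¬q₂ ∣ d := fun h => hq₂ (Nat.eq_one_of_dvd_coprimes hcop (h.trans hd) dvd_rfl)
  have hdn : d ∣ q₁ * q₂ := hd.trans (dvd_mul_right _ _)
  refine ⟨⟨_, span_natCast_ne_bot_and_ne_top hdn hd1 fun h => hq₂d (h ▸ dvd_mul_left _ _)⟩, ?_⟩
  rw [belowClass_eq_none_iff, span_natCast_le_span_natCast_iff (dvd_mul_right _ _),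
    span_natCast_le_span_natCast_iff (dvd_mul_left _ _)]
  exact ⟨fun h => hdq (Nat.dvd_antisymm hd h), hq₂d⟩

theorem exists_ne_belowClass_eq_some_zero (hq₁ : 1 < q₁) {d : ℕ} (hd : d ∣ q₂) (hd1 : d ≠ 1)
    (hdq : d ≠ q₂) : ∃ I J : {I : Ideal (ZMod (q₁ * q₂)) // I ≠ ⊥ ∧ I ≠ ⊤}, I ≠ J ∧
      belowClass (Ideal.span {(q₁ : ZMod (q₁ * q₂))}) (Ideal.span {(q₂ : ZMod (q₁ * q₂))}) I.1
        = some 0 ∧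
      belowClass (Ideal.span {(q₁ : ZMod (q₁ * q₂))}) (Ideal.span {(q₂ : ZMod (q₁ * q₂))}) J.1
        = some 0 := by
  obtain ⟨I, J, hIJ, hI, hJ⟩ := exists_ne_le_span_natCast (mul_dvd_mul_left q₁ hd) hq₁.ne' hd1
    fun h => hdq (Nat.eq_of_mul_eq_mul_left (by omega) h)
  exact ⟨I, J, hIJ, belowClass_eq_some_zero_iff.2 hI, belowClass_eq_some_zero_iff.2 hJ⟩

theorem exists_ne_belowClass_eq_some_one (hq₁ : 1 < q₁) (hq₂ : 1 < q₂) (hcop : q₁.Coprime q₂)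
    {d : ℕ} (hd : d ∣ q₁) (hd1 : d ≠ 1) (hdq : d ≠ q₁) :
    ∃ I J : {I : Ideal (ZMod (q₁ * q₂)) // I ≠ ⊥ ∧ I ≠ ⊤}, I ≠ J ∧
      belowClass (Ideal.span {(q₁ : ZMod (q₁ * q₂))}) (Ideal.span {(q₂ : ZMod (q₁ * q₂))}) I.1
        = some 1 ∧
      belowClass (Ideal.span {(q₁ : ZMod (q₁ * q₂))}) (Ideal.span {(q₂ : ZMod (q₁ * q₂))}) J.1
        = some 1 := by
  have : NeZero (q₁ * q₂) := ⟨by positivity⟩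
  have hE := span_natCast_inf_span_natCast_eq_bot hcop
  obtain ⟨I, J, hIJ, hI, hJ⟩ := exists_ne_le_span_natCast
    (mul_comm q₂ d ▸ mul_dvd_mul_right hd q₂) hq₂.ne' hd1
    fun h => hdq (Nat.eq_of_mul_eq_mul_left (by omega) (h.trans (mul_comm _ _)))
  exact ⟨I, J, hIJ, (belowClass_eq_some_one_iff hE I.2.1).2 hI,
    (belowClass_eq_some_one_iff hE J.2.1).2 hJ⟩

end TwoPrimePowers

end ZMod

/-- For `n = p₁^{m₁} p₂^{m₂}` with `p₁ < p₂` primes and `m₁, m₂ > 1`, the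
metric dimension of the essential ideal graph of `ℤ/nℤ` equals `m₁m₂ + m₁ + m₂ - 4`. -/
theorem stmt_14 (p₁ p₂ : ℕ) (hp₁ : p₁.Prime) (hp₂ : p₂.Prime) (hlt : p₁ < p₂)
    (m₁ m₂ : ℕ) (hm₁ : 1 < m₁) (hm₂ : 1 < m₂)
    (n : ℕ) (hn : n = p₁ ^ m₁ * p₂ ^ m₂) :
    metricDim (essentialIdealGraph (ZMod n)) = m₁ * m₂ + m₁ + m₂ - 4 := by
  subst hn
  have hq₁ : IsPrimePow (p₁ ^ m₁) := hp₁.isPrimePow.pow (by omega)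
  have hq₂ : IsPrimePow (p₂ ^ m₂) := hp₂.isPrimePow.pow (by omega)
  have hcop : (p₁ ^ m₁).Coprime (p₂ ^ m₂) :=
    Nat.Coprime.pow m₁ m₂ ((Nat.coprime_primes hp₁ hp₂).2 hlt.ne)
  have : NeZero (p₁ ^ m₁ * p₂ ^ m₂) := ⟨Nat.mul_ne_zero hq₁.ne_zero hq₂.ne_zero⟩
  have hd₁ : p₁ ∣ p₁ ^ m₁ := dvd_pow_self p₁ (by omega)
  have hd₂ : p₂ ∣ p₂ ^ m₂ := dvd_pow_self p₂ (by omega)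
  have hlt₁ : p₁ < p₁ ^ m₁ := lt_self_pow₀ hp₁.one_lt hm₁
  have hlt₂ : p₂ < p₂ ^ m₂ := lt_self_pow₀ hp₂.one_lt hm₂
  rw [SimpleGraph.IsCompleteMultipartiteBy.metricDim_eq
    (isCompleteMultipartiteBy_essentialIdealGraph (ZMod.span_natCast_inf_span_natCast_eq_bot hcop)
      (ZMod.isEssentialIdeal_iff_s14 hq₁ hq₂ hcop))
    (ZMod.exists_belowClass_eq_none hq₂.ne_one hcop hd₁ hp₁.ne_one hlt₁.ne)
    (Fin.forall_fin_two.2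
      ⟨ZMod.exists_ne_belowClass_eq_some_zero hq₁.one_lt hd₂ hp₂.ne_one hlt₂.ne,
        ZMod.exists_ne_belowClass_eq_some_one hq₁.one_lt hq₂.one_lt hcop hd₁ hp₁.ne_one hlt₁.ne⟩),
    ZMod.natCard_nonzero_proper_ideal (fun h => hq₁.ne_one (mul_eq_one.1 h).1),
    hcop.card_divisors_mul, Nat.divisors_prime_pow hp₁, Nat.divisors_prime_pow hp₂]
  simp only [Finset.card_map, Finset.card_range, Nat.card_eq_fintype_card, Fintype.card_option,
    Fintype.card_fin]
  ring_nf
  omega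
end

section
/- Let n = p^m for a prime p and m > 2. Then the essential ideal graph E_{Z_n} of Z_n = Z/nZ has exactly m − 1 vertices, and its first Zagreb index equals (m − 1)(m − 2)^2. -/
/-! The ideals of `ℤ/p^mℤ` are exactly the `m + 1` ideals `(p^k)`, `0 ≤ k ≤ m`, and they form a
chain. In a ring whose ideals form a chain, every nonzero ideal meets every other nonzero ideal
nontrivially, so the sum of two nonzero ideals is always essential and the essential ideal graph
is complete. Here it is the complete graph on the `m - 1` nonzero proper ideals, every vertex has
degree `m - 2`, and `M₁ = (m - 1)(m - 2)²`. -/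

namespace ZMod

theorem exists_dvd_ideal_eq_span_natCast (n : ℕ) (I : Ideal (ZMod n)) :
    ∃ d : ℕ, d ∣ n ∧ I = Ideal.span {(d : ZMod n)} := by
  set f := Int.castRingHom (ZMod n)
  obtain ⟨g, hg⟩ := Submodule.IsPrincipal.principal (I.comap f)
  rw [Ideal.submodule_span_eq, ← Int.span_natAbs] at hg
  have hn : (n : ℤ) ∈ I.comap f := by simp [Ideal.mem_comap, f]
  rw [hg, Ideal.mem_span_singleton, Int.natCast_dvd_natCast] at hn
  refine ⟨g.natAbs, hn, ?_⟩
  rw [← Ideal.map_comap_of_surjective f intCast_surjective I, hg, Ideal.map_span,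
    Set.image_singleton, map_natCast]

theorem exists_ideal_eq_span_prime_pow {p : ℕ} (hp : p.Prime) {m : ℕ}
    (I : Ideal (ZMod (p ^ m))) : ∃ k ≤ m, I = Ideal.span {(p : ZMod (p ^ m)) ^ k} := by
  obtain ⟨d, hd, rfl⟩ := exists_dvd_ideal_eq_span_natCast _ I
  obtain ⟨k, hk, rfl⟩ := (Nat.dvd_prime_pow hp).mp hd
  exact ⟨k, hk, by rw [Nat.cast_pow]⟩

theorem le_of_prime_pow_mem_span_prime_pow {p : ℕ} (hp : p.Prime) {m j k : ℕ} (hk : k ≤ m)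
    (h : (p : ZMod (p ^ m)) ^ j ∈ Ideal.span {(p : ZMod (p ^ m)) ^ k}) : k ≤ j := by
  obtain ⟨c, hc⟩ := Ideal.mem_span_singleton'.mp h
  have hc' := congrArg (castHom (pow_dvd_pow p hk) (ZMod (p ^ k))) hc
  rw [map_mul, map_pow, map_pow, map_natCast, ← Nat.cast_pow p k, natCast_self, mul_zero,
    ← Nat.cast_pow, eq_comm, natCast_eq_zero_iff] at hc'
  exact (Nat.pow_dvd_pow_iff_le_right hp.one_lt).mp hc'

theorem span_prime_pow_injOn {p : ℕ} (hp : p.Prime) (m : ℕ) :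
    Set.InjOn (fun k : ℕ => Ideal.span {(p : ZMod (p ^ m)) ^ k}) (Set.Iic m) := by
  intro j hj k hk (h : Ideal.span _ = Ideal.span _)
  apply le_antisymm
  · exact le_of_prime_pow_mem_span_prime_pow hp hj (h ▸ Ideal.mem_span_singleton_self _)
  · exact le_of_prime_pow_mem_span_prime_pow hp hk (h ▸ Ideal.mem_span_singleton_self _)

theorem card_ideal_prime_pow {p : ℕ} (hp : p.Prime) (m : ℕ) :
    Nat.card (Ideal (ZMod (p ^ m))) = m + 1 := by
  let f : Fin (m + 1) → Ideal (ZMod (p ^ m)) := fun k => Ideal.span {(p : ZMod (p ^ m)) ^ k.val}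
  have hf : f.Bijective := by
    refine ⟨fun j k h => Fin.ext (span_prime_pow_injOn hp m (Nat.lt_succ_iff.mp j.2)
      (Nat.lt_succ_iff.mp k.2) h), fun I => ?_⟩
    obtain ⟨k, hk, rfl⟩ := exists_ideal_eq_span_prime_pow hp I
    exact ⟨⟨k, Nat.lt_succ_of_le hk⟩, rfl⟩
  rw [← Nat.card_eq_of_bijective f hf, Nat.card_fin]

theorem ideal_le_total_prime_pow {p : ℕ} (hp : p.Prime) {m : ℕ} (I J : Ideal (ZMod (p ^ m))) :
    I ≤ J ∨ J ≤ I := by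
  obtain ⟨j, -, rfl⟩ := exists_ideal_eq_span_prime_pow hp I
  obtain ⟨k, -, rfl⟩ := exists_ideal_eq_span_prime_pow hp J
  simp only [Ideal.span_singleton_le_span_singleton]
  exact (le_total k j).imp (pow_dvd_pow _) (pow_dvd_pow _)

end ZMod

theorem gdeg_top {V : Type*} [Finite V] (v : V) : gdeg (⊤ : SimpleGraph V) v = Nat.card V - 1 := by
  classical
  have := Fintype.ofFinite V
  simp only [gdeg, SimpleGraph.top_adj, Nat.card_eq_fintype_card]
  rw [Fintype.card_subtype_compl, Fintype.card_subtype_eq']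

theorem zagreb1_top {V : Type*} [Finite V] :
    zagreb1 (⊤ : SimpleGraph V) = Nat.card V * (Nat.card V - 1) ^ 2 := by
  have := Fintype.ofFinite V
  simp only [zagreb1, gdeg_top, finsum_eq_sum_of_fintype, Finset.sum_const, Finset.card_univ,
    smul_eq_mul, Nat.card_eq_fintype_card]

theorem Nat.card_ne_bot_and_ne_top {α : Type*} [PartialOrder α] [BoundedOrder α] [Finite α] :
    Nat.card {a : α // a ≠ ⊥ ∧ a ≠ ⊤} = Nat.card α - 2 := by
  classical
  have := Fintype.ofFinite α
  rcases subsingleton_or_nontrivial α with hα | hα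
  · have : IsEmpty {a : α // a ≠ ⊥ ∧ a ≠ ⊤} := ⟨fun a => a.2.1 (Subsingleton.elim _ _)⟩
    have := Fintype.card_le_one_iff_subsingleton.mpr hα
    rw [Nat.card_of_isEmpty, Nat.card_eq_fintype_card]
    omega
  · have hfilter : Finset.univ.filter (fun a : α => a ≠ ⊥ ∧ a ≠ ⊤) = Finset.univ \ {⊥, ⊤} := by
      ext a
      simp
    rw [Nat.card_eq_fintype_card, Fintype.card_subtype, hfilter, Finset.card_univ_sdiff,
      Finset.card_pair bot_ne_top, Nat.card_eq_fintype_card]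

theorem isEssentialIdeal_of_ne_bot {R : Type*} [CommRing R]
    (htotal : ∀ I J : Ideal R, I ≤ J ∨ J ≤ I) {I : Ideal R} (hI : I ≠ ⊥) : IsEssentialIdeal I :=
  ⟨hI, fun J hJ => (htotal I J).elim (fun h => by rwa [inf_eq_left.mpr h])
    (fun h => by rwa [inf_eq_right.mpr h])⟩

theorem essentialIdealGraph_eq_top {R : Type*} [CommRing R]
    (htotal : ∀ I J : Ideal R, I ≤ J ∨ J ≤ I) : essentialIdealGraph R = ⊤ := by
  ext I J
  exact ⟨fun h => h.1, fun h => ⟨h, isEssentialIdeal_of_ne_bot htotal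
    (ne_bot_of_le_ne_bot I.2.1 le_sup_left)⟩⟩

theorem stmt_15_general (p : ℕ) (hp : p.Prime) (m : ℕ)
    (n : ℕ) (hn : n = p ^ m) :
    Nat.card {I : Ideal (ZMod n) // I ≠ ⊥ ∧ I ≠ ⊤} = m - 1 ∧
      zagreb1 (essentialIdealGraph (ZMod n)) = (m - 1) * (m - 2) ^ 2 := by
  subst hn
  have hcard := ZMod.card_ideal_prime_pow hp m
  have : Finite (Ideal (ZMod (p ^ m))) := Nat.finite_of_card_ne_zero (by omega)
  have hvert : Nat.card {I : Ideal (ZMod (p ^ m)) // I ≠ ⊥ ∧ I ≠ ⊤} = m - 1 := by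
    rw [Nat.card_ne_bot_and_ne_top, hcard]
    omega
  refine ⟨hvert, ?_⟩
  rw [essentialIdealGraph_eq_top (ZMod.ideal_le_total_prime_pow hp), zagreb1_top, hvert,
    Nat.sub_sub]

/-- For `n = p^m` with `p` prime and `m > 2`, the essential ideal graph of
`ℤ/nℤ` has exactly `m - 1` vertices and its first Zagreb index equals `(m-1)(m-2)²`. -/
theorem stmt_15 (p : ℕ) (hp : p.Prime) (m : ℕ) (hm : 2 < m)
    (n : ℕ) (hn : n = p ^ m) :
    Nat.card {I : Ideal (ZMod n) // I ≠ ⊥ ∧ I ≠ ⊤} = m - 1 ∧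
      zagreb1 (essentialIdealGraph (ZMod n)) = (m - 1) * (m - 2) ^ 2 :=
  stmt_15_general p hp m n hn
end
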